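/- Let n ≥ 1 be an integer and δ ∈ (n, n+1), and let u_n(δ) be the unique positive solution of e^{-u} = 1 - u/1! + ... + (-1)^{n-1}u^{n-1}/(n-1)! + (-1)^n·δ·u^n/(n!(u+δ)). Then (n+1-δ)δ/(δ-n) + (n+1-δ) < u_n(δ) < δ/(δ-n). -/

import Mathlib

open Real Finset

/-- Degree-(n-1) Taylor polynomial of `exp(-u)` at 0. -/
noncomputable def A (n : ℕ) (u : ℝ) : ℝ :=
  ∑ k ∈ Finset.range n, (-1 : ℝ) ^ k * u ^ k / (Nat.factorial k)

/-- Signed remainder of the Taylor expansion of `exp(-u)`. -/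
noncomputable def R (m : ℕ) (u : ℝ) : ℝ := (-1 : ℝ) ^ m * (Real.exp (-u) - A m u)

lemma neg_one_pow_sq (m : ℕ) : ((-1 : ℝ) ^ m) * ((-1 : ℝ) ^ m) = 1 := by
  rw [← mul_pow]; norm_num

lemma A_succ (m : ℕ) (u : ℝ) :
    A (m + 1) u = A m u + (-1 : ℝ) ^ m * u ^ m / (Nat.factorial m) :=
  Finset.sum_range_succ _ m

lemma R_succ (m : ℕ) (u : ℝ) : R (m + 1) u = u ^ m / (Nat.factorial m) - R m u := by
  have h := neg_one_pow_sq m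
  simp only [R, A_succ, pow_succ]
  linear_combination (u ^ m / (Nat.factorial m : ℝ)) * h

lemma A_zero_succ (m : ℕ) : A (m + 1) 0 = 1 := by
  unfold A
  rw [Finset.sum_range_succ']
  simp

lemma R_zero (m : ℕ) : R (m + 1) 0 = 0 := by
  simp [R, A_zero_succ]

lemma R_one (u : ℝ) : R 1 u = 1 - Real.exp (-u) := by
  simp [R, A]

lemma R_two (u : ℝ) : R 2 u = u - (1 - Real.exp (-u)) := by
  have h := R_succ 1 u
  rw [R_one] at h
  simpa [Nat.factorial] using h

lemma hasDerivAt_A (m : ℕ) (u : ℝ) :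
    HasDerivAt (fun v => A (m + 1) v) (-(A m u)) u := by
  have hfun : (fun v => A (m + 1) v) =
      (fun v : ℝ => ∑ k ∈ Finset.range (m + 1), ((-1 : ℝ) ^ k / (Nat.factorial k)) * v ^ k) := by
    funext v
    exact Finset.sum_congr rfl (fun k _ => by ring)
  rw [hfun]
  have hterm : ∀ k ∈ Finset.range (m + 1),
      HasDerivAt (fun v : ℝ => ((-1 : ℝ) ^ k / (Nat.factorial k)) * v ^ k)
        (((-1 : ℝ) ^ k / (Nat.factorial k)) * ((k : ℝ) * u ^ (k - 1))) u := by
    intro k _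
    exact (hasDerivAt_pow k u).const_mul _
  have hsum := HasDerivAt.fun_sum hterm
  refine hsum.congr_deriv (Eq.symm ?_)
  rw [Finset.sum_range_succ']
  have hz : ((-1 : ℝ) ^ 0 / (Nat.factorial 0)) * (((0 : ℕ) : ℝ) * u ^ (0 - 1)) = 0 := by simp
  rw [hz, add_zero]
  unfold A
  rw [← Finset.sum_neg_distrib]
  refine Finset.sum_congr rfl (fun i _ => ?_)
  have hfmul : ((Nat.factorial (i + 1) : ℝ)) = ((i : ℝ) + 1) * (Nat.factorial i : ℝ) := by
    rw [Nat.factorial_succ]; push_cast; ring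
  have hf : (Nat.factorial i : ℝ) ≠ 0 := by
    exact_mod_cast Nat.factorial_ne_zero i
  have hi1 : ((i : ℝ) + 1) ≠ 0 := by positivity
  rw [pow_succ, hfmul]
  have : ((i + 1 : ℕ) : ℝ) = (i : ℝ) + 1 := by push_cast; ring
  rw [this]
  have hred : (i + 1 - 1 : ℕ) = i := rfl
  rw [hred]
  field_simp

lemma hasDerivAt_R (m : ℕ) (u : ℝ) :
    HasDerivAt (fun v => R (m + 1) v) (R m u) u := by
  have h1 : HasDerivAt (fun v : ℝ => Real.exp (-v)) (-Real.exp (-u)) u := by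
    simpa using (hasDerivAt_neg u).exp
  have h2 := hasDerivAt_A m u
  have h3 := (h1.sub h2).const_mul ((-1 : ℝ) ^ (m + 1))
  have hfun : (fun v => R (m + 1) v) =
      (fun v => (-1 : ℝ) ^ (m + 1) * (Real.exp (-v) - A (m + 1) v)) := rfl
  rw [hfun]
  refine h3.congr_deriv (Eq.symm ?_)
  simp only [R, pow_succ]
  ring

/-- Positivity via derivative: if `f 0 = 0` and `f' = g > 0` on `(0,∞)`, then `f > 0` there. -/
lemma pos_of_hasDerivAt (f g : ℝ → ℝ) (h0 : f 0 = 0)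
    (hd : ∀ x : ℝ, HasDerivAt f (g x) x) (hg : ∀ x : ℝ, 0 < x → 0 < g x) :
    ∀ u : ℝ, 0 < u → 0 < f u := by
  intro u hu
  have hmono : StrictMonoOn f (Set.Ici (0 : ℝ)) := by
    refine strictMonoOn_of_deriv_pos (convex_Ici 0) ?_ ?_
    · exact fun x _ => ((hd x).differentiableAt).continuousAt.continuousWithinAt
    · intro x hx
      rw [interior_Ici] at hx
      rw [(hd x).deriv]
      exact hg x hx
  have := hmono Set.self_mem_Ici (Set.mem_Ici.mpr hu.le) hu
  rwa [h0] at this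

lemma R_pos : ∀ m : ℕ, ∀ u : ℝ, 0 < u → 0 < R (m + 1) u := by
  intro m
  induction m with
  | zero =>
    intro u hu
    rw [R_one]
    have : Real.exp (-u) < 1 := Real.exp_lt_one_iff.mpr (by linarith)
    linarith
  | succ k ih =>
    exact pos_of_hasDerivAt _ _ (R_zero (k + 1)) (fun x => hasDerivAt_R (k + 1) x) ih

/-- The function giving the upper bound. -/
noncomputable def Df (m : ℕ) (u : ℝ) : ℝ := (m : ℝ) * R (m + 1) u - (u - 1) * R m u

lemma Df_zero (m : ℕ) : Df (m + 1) 0 = 0 := by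
  simp [Df, R_zero]

lemma hasDerivAt_Df (m : ℕ) (u : ℝ) :
    HasDerivAt (fun v => Df (m + 1) v) (Df m u) u := by
  have h1 : HasDerivAt (fun v : ℝ => ((m : ℝ) + 1) * R (m + 2) v)
      (((m : ℝ) + 1) * R (m + 1) u) u := (hasDerivAt_R (m + 1) u).const_mul _
  have h2 : HasDerivAt (fun v : ℝ => (v - 1) * R (m + 1) v)
      (1 * R (m + 1) u + (u - 1) * R m u) u :=
    ((hasDerivAt_id u).sub_const 1).mul (hasDerivAt_R m u)
  have h3 := h1.sub h2
  have hfun : (fun v => Df (m + 1) v) =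
      (fun v : ℝ => ((m : ℝ) + 1) * R (m + 2) v - (v - 1) * R (m + 1) v) := by
    funext v
    simp only [Df]
    push_cast
    ring
  rw [hfun]
  refine h3.congr_deriv (Eq.symm ?_)
  simp only [Df]
  ring

lemma Df_one (u : ℝ) : Df 1 u = u * Real.exp (-u) := by
  simp only [Df, show (1 : ℕ) + 1 = 2 from rfl, R_one, R_two]
  push_cast
  ring

lemma Df_pos : ∀ m : ℕ, ∀ u : ℝ, 0 < u → 0 < Df (m + 1) u := by
  intro m
  induction m with
  | zero =>
    intro u hu
    rw [Df_one]
    positivity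
  | succ k ih =>
    exact pos_of_hasDerivAt _ _ (Df_zero (k + 1)) (fun x => hasDerivAt_Df (k + 1) x) ih

/-- The function giving the lower bound. -/
noncomputable def Wf (m : ℕ) (u : ℝ) : ℝ :=
  u * (u ^ 3 + 3 * (m : ℝ) * u ^ 2 + (m : ℝ) * (3 * m + 5) * u
      + (m : ℝ) * (m + 2) * (m + 3)) * R m u
  - (m : ℝ) * (u ^ 3 + (3 * (m : ℝ) + 1) * u ^ 2 + (3 * (m : ℝ) ^ 2 + 7 * m + 2) * u
      + ((m : ℝ) + 1) * (m + 2) * (m + 3)) * R (m + 1) u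

lemma Wf_zero (m : ℕ) (hm : 1 ≤ m) : Wf m 0 = 0 := by
  obtain ⟨k, rfl⟩ : ∃ k, m = k + 1 := ⟨m - 1, (Nat.succ_pred_eq_of_pos hm).symm⟩
  simp [Wf, R_zero]

lemma hasDerivAt_poly4 (a4 a3 a2 a1 a0 : ℝ) (u : ℝ) :
    HasDerivAt (fun v : ℝ => a4 * v ^ 4 + a3 * v ^ 3 + a2 * v ^ 2 + a1 * v + a0)
      (4 * a4 * u ^ 3 + 3 * a3 * u ^ 2 + 2 * a2 * u + a1) u := by
  have p4 : HasDerivAt (fun x : ℝ => x ^ 4) (4 * u ^ 3) u := by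
    simpa using hasDerivAt_pow 4 u
  have p3 : HasDerivAt (fun x : ℝ => x ^ 3) (3 * u ^ 2) u := by
    simpa using hasDerivAt_pow 3 u
  have p2 : HasDerivAt (fun x : ℝ => x ^ 2) (2 * u) u := by
    simpa using hasDerivAt_pow 2 u
  have p1 : HasDerivAt (fun x : ℝ => x) 1 u := hasDerivAt_id u
  have h := ((((p4.const_mul a4).add (p3.const_mul a3)).add (p2.const_mul a2)).add
    (p1.const_mul a1)).add_const a0
  refine h.congr_deriv (Eq.symm ?_)
  ring

lemma hasDerivAt_Wf (m : ℕ) (u : ℝ) :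
    HasDerivAt (fun v => Wf (m + 1) v) (Wf m u) u := by
  set c : ℝ := (m : ℝ) with hc
  -- P v = v^4 + 3(c+1) v^3 + (c+1)(3c+8) v^2 + (c+1)(c+3)(c+4) v
  have hP : HasDerivAt (fun v : ℝ => 1 * v ^ 4 + (3 * (c + 1)) * v ^ 3
      + ((c + 1) * (3 * c + 8)) * v ^ 2 + ((c + 1) * (c + 3) * (c + 4)) * v + 0)
      (4 * 1 * u ^ 3 + 3 * (3 * (c + 1)) * u ^ 2 + 2 * ((c + 1) * (3 * c + 8)) * u
        + (c + 1) * (c + 3) * (c + 4)) u := hasDerivAt_poly4 _ _ _ _ _ u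
  have hQ : HasDerivAt (fun v : ℝ => 0 * v ^ 4 + ((c + 1)) * v ^ 3
      + ((c + 1) * (3 * c + 4)) * v ^ 2 + ((c + 1) * (3 * c ^ 2 + 13 * c + 12)) * v
      + ((c + 1) * (c + 2) * (c + 3) * (c + 4)))
      (4 * 0 * u ^ 3 + 3 * ((c + 1)) * u ^ 2 + 2 * ((c + 1) * (3 * c + 4)) * u
        + (c + 1) * (3 * c ^ 2 + 13 * c + 12)) u := hasDerivAt_poly4 _ _ _ _ _ u
  have h1 := hP.mul (hasDerivAt_R m u)
  have h2 := hQ.mul (hasDerivAt_R (m + 1) u)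
  have h3 := h1.sub h2
  have hfun : (fun v => Wf (m + 1) v) =
      (fun v : ℝ => (1 * v ^ 4 + (3 * (c + 1)) * v ^ 3 + ((c + 1) * (3 * c + 8)) * v ^ 2
          + ((c + 1) * (c + 3) * (c + 4)) * v + 0) * R (m + 1) v
        - (0 * v ^ 4 + ((c + 1)) * v ^ 3 + ((c + 1) * (3 * c + 4)) * v ^ 2
          + ((c + 1) * (3 * c ^ 2 + 13 * c + 12)) * v
          + ((c + 1) * (c + 2) * (c + 3) * (c + 4))) * R (m + 2) v) := by
    funext v
    simp only [Wf, hc]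
    push_cast
    ring
  rw [hfun]
  refine h3.congr_deriv (Eq.symm ?_)
  -- now prove the value identity
  have hRm : R m u = u ^ m / (Nat.factorial m : ℝ) - R (m + 1) u := by
    have := R_succ m u; linarith
  have hRm2 : R (m + 2) u = u ^ (m + 1) / (Nat.factorial (m + 1) : ℝ) - R (m + 1) u :=
    R_succ (m + 1) u
  have hfmul : ((Nat.factorial (m + 1) : ℝ)) = (c + 1) * (Nat.factorial m : ℝ) := by
    rw [Nat.factorial_succ, hc]; push_cast; ring
  have hpow : u ^ (m + 1) = u ^ m * u := pow_succ u m
  have hf : (Nat.factorial m : ℝ) ≠ 0 := by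
    exact_mod_cast Nat.factorial_ne_zero m
  have hc1 : (c + 1) ≠ 0 := by
    have : (0 : ℝ) ≤ c := by rw [hc]; positivity
    linarith
  rw [Wf, hRm, hRm2, hfmul, hpow]
  push_cast [← hc]
  field_simp
  ring

lemma Wf_one (u : ℝ) :
    Wf 1 u = 24 - (u ^ 4 + 4 * u ^ 3 + 12 * u ^ 2 + 24 * u + 24) * Real.exp (-u) := by
  simp only [Wf, show (1 : ℕ) + 1 = 2 from rfl, R_one, R_two]
  push_cast
  ring

lemma quartic_lt_exp {u : ℝ} (hu : 0 < u) :
    u ^ 4 + 4 * u ^ 3 + 12 * u ^ 2 + 24 * u + 24 < 24 * Real.exp u := by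
  have h := Real.sum_le_exp_of_nonneg hu.le 6
  have hsum : ∑ i ∈ Finset.range 6, u ^ i / (Nat.factorial i : ℝ)
      = 1 + u + u ^ 2 / 2 + u ^ 3 / 6 + u ^ 4 / 24 + u ^ 5 / 120 := by
    simp [Finset.sum_range_succ, Nat.factorial]
  rw [hsum] at h
  nlinarith [pow_pos hu 5]

lemma Wf_pos : ∀ m : ℕ, ∀ u : ℝ, 0 < u → 0 < Wf (m + 1) u := by
  intro m
  induction m with
  | zero =>
    intro u hu
    rw [Wf_one]
    have h := quartic_lt_exp hu
    have h2 : (u ^ 4 + 4 * u ^ 3 + 12 * u ^ 2 + 24 * u + 24) * Real.exp (-u)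
        < (24 * Real.exp u) * Real.exp (-u) :=
      mul_lt_mul_of_pos_right h (Real.exp_pos _)
    have h3 : (24 * Real.exp u) * Real.exp (-u) = 24 := by
      rw [mul_assoc, ← Real.exp_add]; simp
    linarith
  | succ k ih =>
    exact pos_of_hasDerivAt (fun v => Wf (k + 1 + 1) v) (fun v => Wf (k + 1) v)
      (Wf_zero (k + 1 + 1) (by omega)) (fun x => hasDerivAt_Wf (k + 1) x) ih

set_option maxHeartbeats 2000000 in
theorem stmt16 (n : ℕ) (hn : 1 ≤ n) (δ : ℝ) (hδ : δ ∈ Set.Ioo (n : ℝ) ((n : ℝ) + 1))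
    (u₀ : ℝ) (hu₀ : 0 < u₀)
    (heq : Real.exp (-u₀) = A n u₀ + (-1 : ℝ) ^ n * δ * u₀ ^ n / (Nat.factorial n * (u₀ + δ))) :
    ((n : ℝ) + 1 - δ) * δ / (δ - n) + ((n : ℝ) + 1 - δ) < u₀ ∧ u₀ < δ / (δ - n) := by
  obtain ⟨hδ1, hδ2⟩ := hδ
  have hn1 : (1 : ℝ) ≤ (n : ℝ) := by exact_mod_cast hn
  have hdn : (0 : ℝ) < δ - n := by linarith
  have hδpos : (0 : ℝ) < δ := by linarith
  have hsum : (0 : ℝ) < u₀ + δ := by linarith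
  have hfpos : (0 : ℝ) < (Nat.factorial n : ℝ) := by
    exact_mod_cast Nat.factorial_pos n
  have hq : (0 : ℝ) < u₀ ^ n / (Nat.factorial n : ℝ) := by positivity
  set q : ℝ := u₀ ^ n / (Nat.factorial n : ℝ) with hqdef
  set x : ℝ := R n u₀ with hxdef
  set y : ℝ := R (n + 1) u₀ with hydef
  -- from heq : x = δ * q / (u₀ + δ)
  have hfne : (Nat.factorial n : ℝ) ≠ 0 := ne_of_gt hfpos
  have hsne : u₀ + δ ≠ 0 := ne_of_gt hsum
  have hx : x = δ * q / (u₀ + δ) := by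
    have h1 := neg_one_pow_sq n
    have h2 : Real.exp (-u₀) - A n u₀
        = (-1 : ℝ) ^ n * δ * u₀ ^ n / (Nat.factorial n * (u₀ + δ)) := by
      rw [heq]; ring
    have h3 : x = δ * u₀ ^ n / ((Nat.factorial n : ℝ) * (u₀ + δ)) := by
      calc x = (-1 : ℝ) ^ n * ((-1 : ℝ) ^ n * δ * u₀ ^ n
            / ((Nat.factorial n : ℝ) * (u₀ + δ))) := by rw [hxdef, R, h2]
        _ = ((-1 : ℝ) ^ n * (-1 : ℝ) ^ n) * (δ * u₀ ^ n
            / ((Nat.factorial n : ℝ) * (u₀ + δ))) := by ring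
        _ = δ * u₀ ^ n / ((Nat.factorial n : ℝ) * (u₀ + δ)) := by rw [h1, one_mul]
    rw [h3, hqdef]
    field_simp
  have hxy : x + y = q := by
    rw [hxdef, hydef, hqdef, R_succ n u₀]
    ring
  have hy : y = u₀ * q / (u₀ + δ) := by
    have hyq : y = q - x := by linarith
    rw [hyq, hx]
    field_simp
    ring
  have hypos : 0 < y := by rw [hy]; positivity
  have hux : u₀ * x = δ * y := by rw [hx, hy]; field_simp
  constructor
  · -- lower bound, via Wf
    obtain ⟨m, rfl⟩ : ∃ m, n = m + 1 := ⟨n - 1, (Nat.succ_pred_eq_of_pos hn).symm⟩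
    have hW := Wf_pos m u₀ hu₀
    obtain ⟨N, hN⟩ : ∃ N : ℝ, N = ((m : ℕ) : ℝ) + 1 := ⟨_, rfl⟩
    have hNcast : (((m + 1 : ℕ) : ℝ)) = N := by rw [hN]; push_cast; ring
    have hNge : (1 : ℝ) ≤ N := by
      have := Nat.cast_nonneg (α := ℝ) m
      rw [hN]; linarith
    obtain ⟨PA, hPA⟩ : ∃ PA : ℝ, PA = u₀ ^ 3 + 3 * N * u₀ ^ 2 + N * (3 * N + 5) * u₀
      + N * (N + 2) * (N + 3) := ⟨_, rfl⟩
    obtain ⟨PM, hPM⟩ : ∃ PM : ℝ, PM = u₀ ^ 3 + (3 * N + 1) * u₀ ^ 2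
      + (3 * N ^ 2 + 7 * N + 2) * u₀ + (N + 1) * (N + 2) * (N + 3) := ⟨_, rfl⟩
    have hWexp : Wf (m + 1) u₀ = u₀ * PA * x - N * PM * y := by
      simp only [Wf]
      rw [hxdef, hydef, hPA, hPM, hN]
      push_cast
      ring
    have hPApos : 0 < PA := by
      rw [hPA]
      nlinarith [pow_pos hu₀ 3, sq_nonneg u₀, hu₀, hNge]
    have hWy : Wf (m + 1) u₀ = y * (δ * PA - N * PM) := by
      rw [hWexp]
      have h9 : u₀ * PA * x = PA * (u₀ * x) := by ring
      rw [h9, hux]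
      ring
    have hZ : 0 < δ * PA - N * PM := by
      by_contra hcon
      push_neg at hcon
      have : y * (δ * PA - N * PM) ≤ 0 :=
        mul_nonpos_of_nonneg_of_nonpos hypos.le hcon
      rw [← hWy] at this
      linarith [hW]
    have hδN : (0 : ℝ) < δ - N := by
      rw [hN]
      push_cast at hδ1 ⊢
      linarith
    have hfac : 0 < 2 * δ * PA + 2 * N * PM + (u₀ - 3 * N - 2) * PA := by
      have hexp : 2 * N * PM + (u₀ - N - 2) * PA =
          u₀ ^ 4 + (4 * N - 2) * u₀ ^ 3 + N * (6 * N + 1) * u₀ ^ 2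
          + 4 * N ^ 2 * (N + 2) * u₀ + N ^ 2 * (N + 2) * (N + 3) := by
        rw [hPA, hPM]; ring
      have hNpos : (0 : ℝ) < N := by linarith
      have t1 : 0 < u₀ ^ 4 := pow_pos hu₀ 4
      have t2 : 0 ≤ (4 * N - 2) * u₀ ^ 3 :=
        mul_nonneg (by linarith) (pow_pos hu₀ 3).le
      have t3 : 0 ≤ N * (6 * N + 1) * u₀ ^ 2 :=
        mul_nonneg (mul_nonneg hNpos.le (by linarith)) (pow_pos hu₀ 2).le
      have t4 : 0 ≤ 4 * N ^ 2 * (N + 2) * u₀ :=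
        mul_nonneg (mul_nonneg (by nlinarith [sq_nonneg N]) (by linarith)) hu₀.le
      have t5 : 0 ≤ N ^ 2 * (N + 2) * (N + 3) :=
        mul_nonneg (mul_nonneg (sq_nonneg N) (by linarith)) (by linarith)
      have h1 : 0 < u₀ ^ 4 + (4 * N - 2) * u₀ ^ 3 + N * (6 * N + 1) * u₀ ^ 2
          + 4 * N ^ 2 * (N + 2) * u₀ + N ^ 2 * (N + 2) * (N + 3) := by linarith
      have hlin : 2 * δ * PA + 2 * N * PM + (u₀ - 3 * N - 2) * PA
          = (2 * N * PM + (u₀ - N - 2) * PA) + 2 * ((δ - N) * PA) := by ring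
      rw [hlin, hexp]
      have h9 := mul_pos hδN hPApos
      linarith
    have hcert : 0 ≤ 2 * N * u₀ ^ 2 * ((u₀ - 2) ^ 2 + (N - 1) * (2 * u₀ + 5) + (N - 1) ^ 2) := by
      have hb : 0 ≤ (u₀ - 2) ^ 2 + (N - 1) * (2 * u₀ + 5) + (N - 1) ^ 2 := by
        nlinarith [sq_nonneg (u₀ - 2), sq_nonneg (N - 1), hu₀, hNge]
      have ha : 0 ≤ 2 * N * u₀ ^ 2 := by nlinarith [sq_nonneg u₀, hNge]
      exact mul_nonneg ha hb
    have hkey : PA ^ 2 * (u₀ * (δ - N) - (N + 1 - δ) * (2 * δ - N)) =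
        2 * N * u₀ ^ 2 * ((u₀ - 2) ^ 2 + (N - 1) * (2 * u₀ + 5) + (N - 1) ^ 2)
        + (δ * PA - N * PM) * (2 * δ * PA + 2 * N * PM + (u₀ - 3 * N - 2) * PA) := by
      rw [hPA, hPM]; ring
    have hPhi : 0 < u₀ * (δ - N) - (N + 1 - δ) * (2 * δ - N) := by
      have h2 : 0 < PA ^ 2 * (u₀ * (δ - N) - (N + 1 - δ) * (2 * δ - N)) := by
        rw [hkey]
        have := mul_pos hZ hfac
        linarith
      have hPA2 : 0 < PA ^ 2 := pow_pos hPApos 2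
      by_contra hcon
      push_neg at hcon
      have : PA ^ 2 * (u₀ * (δ - N) - (N + 1 - δ) * (2 * δ - N)) ≤ 0 :=
        mul_nonpos_of_nonneg_of_nonpos hPA2.le hcon
      linarith
    rw [hNcast]
    rw [div_add' _ _ _ (ne_of_gt hδN), div_lt_iff₀ hδN]
    nlinarith [hPhi]
  · -- upper bound, via Df
    obtain ⟨m, rfl⟩ : ∃ m, n = m + 1 := ⟨n - 1, (Nat.succ_pred_eq_of_pos hn).symm⟩
    have hD := Df_pos m u₀ hu₀
    have hDexp : Df (m + 1) u₀ = ((m : ℝ) + 1) * y - (u₀ - 1) * x := by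
      simp only [Df]
      rw [hxdef, hydef]
      push_cast
      ring
    have hDy : Df (m + 1) u₀ * u₀ = y * (((m : ℝ) + 1) * u₀ - (u₀ - 1) * δ) := by
      rw [hDexp]
      calc (((m : ℝ) + 1) * y - (u₀ - 1) * x) * u₀
          = ((m : ℝ) + 1) * y * u₀ - (u₀ - 1) * (u₀ * x) := by ring
        _ = ((m : ℝ) + 1) * y * u₀ - (u₀ - 1) * (δ * y) := by rw [hux]
        _ = y * (((m : ℝ) + 1) * u₀ - (u₀ - 1) * δ) := by ring
    have hDypos : 0 < y * (((m : ℝ) + 1) * u₀ - (u₀ - 1) * δ) := by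
      rw [← hDy]
      exact mul_pos hD hu₀
    have hfac : 0 < ((m : ℝ) + 1) * u₀ - (u₀ - 1) * δ := by
      by_contra hcon
      push_neg at hcon
      have : y * (((m : ℝ) + 1) * u₀ - (u₀ - 1) * δ) ≤ 0 :=
        mul_nonpos_of_nonneg_of_nonpos hypos.le hcon
      linarith
    have hcast : ((m + 1 : ℕ) : ℝ) = (m : ℝ) + 1 := by push_cast; ring
    rw [hcast] at hdn ⊢
    rw [lt_div_iff₀ hdn]
    nlinarith [hfac]
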